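/- Let W and T be real n×n matrices with W symmetric positive definite and T symmetric positive semidefinite such that T ≠ 0 (equivalently S = W^{-1/2} T W^{-1/2} has at least one positive eigenvalue). Let μ_s denote the smallest positive eigenvalue of S and μ_max the largest eigenvalue of S. If the parameters α and β satisfy 0 < β < α, α > (1/μ_s - μ_s)/2 and β > (μ_max - 1/μ_max)/2, then ρ(G_{α,β}) < 1. -/

import Mathlib

open Matrix

open scoped ComplexOrder

/-- The positive semidefinite square root of a positive semidefinite matrix (the definition
`Matrix.PosSemidef.sqrt` of the older Mathlib, since removed). -/
noncomputable def Matrix.PosSemidef.sqrt {n 𝕜 : Type*} [Fintype n] [RCLike 𝕜] [DecidableEq n]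
    {A : Matrix n n 𝕜} (hA : A.PosSemidef) : Matrix n n 𝕜 :=
  hA.1.eigenvectorUnitary.1 * diagonal ((↑) ∘ (√·) ∘ hA.1.eigenvalues) *
  (star hA.1.eigenvectorUnitary : Matrix n n 𝕜)

/-!
With `W = P²` and `S = P⁻¹ T P⁻¹ = U D Uᴴ`, the congruence `Q = Uᴴ P` turns `W` into `QᴴQ` and `T`
into `Qᴴ D Q`. All four factors of the TTSCSP iteration matrix are then of the form
`Qᴴ (diagonal) Q`, so `G_{α,β}` is similar to the diagonal matrix of the numbers
`(μ - β)(1 - αμ) / ((1 + βμ)(α + μ))`, `μ` running over the eigenvalues of `S`. Each of them has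
modulus less than one: the upper bound holds for all `μ ≥ 0`, and the lower bound reduces to
`μ² < 1 + 2βμ` (using `β < α`), which is where `β > (μmax - 1/μmax)/2` enters.
-/

open scoped ENNReal

namespace Matrix

variable {n : Type*} [Fintype n] [DecidableEq n]

section Congruence

variable {𝕜 : Type*} [RCLike 𝕜]

theorem PosSemidef.sqrt_isHermitian {A : Matrix n n 𝕜} (hA : A.PosSemidef) :
    hA.sqrt.IsHermitian :=
  isHermitian_mul_mul_conjTranspose _ (isHermitian_diagonal_iff.mpr fun _ => RCLike.conj_ofReal _)

theorem PosSemidef.sqrt_mul_sqrt {A : Matrix n n 𝕜} (hA : A.PosSemidef) :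
    hA.sqrt * hA.sqrt = A := by
  have hU : (star hA.1.eigenvectorUnitary : Matrix n n 𝕜) * hA.1.eigenvectorUnitary.1 = 1 :=
    mem_unitaryGroup_iff'.mp hA.1.eigenvectorUnitary.2
  conv_rhs => rw [hA.1.spectral_theorem, Unitary.conjStarAlgAut_apply]
  simp only [PosSemidef.sqrt, Matrix.mul_assoc]
  rw [← Matrix.mul_assoc (star _ : Matrix n n 𝕜) _, hU, Matrix.one_mul,
    ← Matrix.mul_assoc (diagonal _) (diagonal _), diagonal_mul_diagonal]
  congr 3
  funext i
  simp [← RCLike.ofReal_mul, Real.mul_self_sqrt (hA.eigenvalues_nonneg i)]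

theorem PosSemidef.isUnit_sqrt {A : Matrix n n 𝕜} (hA : A.PosSemidef) (hAu : IsUnit A) :
    IsUnit hA.sqrt := by
  rw [isUnit_iff_isUnit_det] at hAu ⊢
  rw [← hA.sqrt_mul_sqrt, det_mul] at hAu
  exact isUnit_of_mul_isUnit_left hAu

theorem IsHermitian.exists_isUnit_congr_diagonal {P S : Matrix n n 𝕜} (hP : P.IsHermitian)
    (hPu : IsUnit P) (hS : S.IsHermitian) :
    ∃ Q : Matrix n n 𝕜, IsUnit Q ∧ P * P = Qᴴ * Q ∧
      P * S * P = Qᴴ * diagonal (fun i => (hS.eigenvalues i : 𝕜)) * Q := by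
  set U : Matrix n n 𝕜 := hS.eigenvectorUnitary.1
  have hUU : U * star U = 1 := mem_unitaryGroup_iff.mp hS.eigenvectorUnitary.2
  have hQH : (star U * P)ᴴ = P * U := by
    rw [conjTranspose_mul, hP.eq, star_eq_conjTranspose, conjTranspose_conjTranspose]
  refine ⟨star U * P, (Unitary.isUnit_coe (U := star hS.eigenvectorUnitary)).mul hPu, ?_, ?_⟩
  · rw [hQH, Matrix.mul_assoc, ← Matrix.mul_assoc U, hUU, Matrix.one_mul]
  · conv_lhs => rw [hS.spectral_theorem, Unitary.conjStarAlgAut_apply]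
    simp only [hQH, Matrix.mul_assoc, Function.comp_def, U]

theorem PosDef.exists_isUnit_congr_diagonal {W T S : Matrix n n 𝕜} (hW : W.PosDef)
    (hSdef : S = (hW.posSemidef.sqrt)⁻¹ * T * (hW.posSemidef.sqrt)⁻¹) (hS : S.IsHermitian) :
    ∃ Q : Matrix n n 𝕜, IsUnit Q ∧ W = Qᴴ * Q ∧
      T = Qᴴ * diagonal (fun i => (hS.eigenvalues i : 𝕜)) * Q := by
  set P := hW.posSemidef.sqrt
  have hPu : IsUnit P.det := P.isUnit_iff_isUnit_det.mp (hW.posSemidef.isUnit_sqrt hW.isUnit)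
  have hT : T = P * S * P := by
    simp only [hSdef, ← Matrix.mul_assoc, mul_nonsing_inv _ hPu, Matrix.one_mul,
      nonsing_inv_mul_cancel_right _ _ hPu]
  rw [hT, ← hW.posSemidef.sqrt_mul_sqrt]
  exact hW.posSemidef.sqrt_isHermitian.exists_isUnit_congr_diagonal
    (P.isUnit_iff_isUnit_det.mpr hPu) hS

end Congruence

section Diagonal

variable {K : Type*} [Field K]

theorem smul_mul_add_smul_mul_diagonal_mul (R Q : Matrix n n K) (d : n → K) (a b : K) :
    a • (R * Q) + b • (R * diagonal d * Q) = R * diagonal (fun i => a + b * d i) * Q := by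
  have : diagonal (fun i => a + b * d i) = a • 1 + b • diagonal d := by
    ext i j
    by_cases h : i = j <;> simp [h]
  rw [this, Matrix.mul_add, Matrix.add_mul, Matrix.mul_smul, Matrix.mul_smul, Matrix.smul_mul,
    Matrix.smul_mul, Matrix.mul_one]

theorem inv_mul_diagonal_mul_mul {R Q : Matrix n n K} (hR : IsUnit R) {x : n → K}
    (hx : ∀ i, x i ≠ 0) (y : n → K) :
    (R * diagonal x * Q)⁻¹ * (R * diagonal y * Q) = Q⁻¹ * diagonal (fun i => y i / x i) * Q := by
  have hxinv : (diagonal x)⁻¹ = diagonal fun i => (x i)⁻¹ := by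
    refine inv_eq_right_inv ?_
    rw [diagonal_mul_diagonal, ← diagonal_one]
    exact congrArg diagonal (funext fun i => mul_inv_cancel₀ (hx i))
  rw [Matrix.mul_inv_rev, Matrix.mul_inv_rev, hxinv]
  simp only [Matrix.mul_assoc, nonsing_inv_mul_cancel_left _ _ (R.isUnit_iff_isUnit_det.mp hR)]
  simp only [← Matrix.mul_assoc, diagonal_mul_diagonal, div_eq_mul_inv, mul_comm]

theorem inv_mul_mul_mul_inv_mul_mul {Q : Matrix n n K} (hQ : IsUnit Q) (A B : Matrix n n K) :
    Q⁻¹ * A * Q * (Q⁻¹ * B * Q) = Q⁻¹ * (A * B) * Q := by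
  simp only [Matrix.mul_assoc, mul_nonsing_inv_cancel_left _ _ (Q.isUnit_iff_isUnit_det.mp hQ)]

theorem spectralRadius_map_inv_mul_diagonal_mul {𝕜 : Type*} [NormedField 𝕜] (f : K →+* 𝕜)
    {Q : Matrix n n K} (hQ : IsUnit Q) (g : n → K) :
    spectralRadius 𝕜 ((Q⁻¹ * diagonal g * Q).map f) = ⨆ i, (‖f (g i)‖₊ : ℝ≥0∞) := by
  obtain ⟨u, rfl⟩ := hQ
  set v := Units.map (f.mapMatrix : Matrix n n K →+* Matrix n n 𝕜).toMonoidHom u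
  have hconj : (((u⁻¹ : (Matrix n n K)ˣ) : Matrix n n K) * diagonal g * u).map f
      = (v⁻¹ : (Matrix n n 𝕜)ˣ) * diagonal (fun i => f (g i)) * v := by
    simp [v]
  rw [← coe_units_inv, hconj, spectralRadius, spectrum.units_conjugate', spectrum_diagonal,
    iSup_range]

end Diagonal

end Matrix

theorem sq_lt_one_add_two_mul_of_le_of_sub_inv_lt {μ m β : ℝ} (hμ : 0 ≤ μ) (hμm : μ ≤ m)
    (hm : (m - 1 / m) / 2 < β) : μ ^ 2 < 1 + 2 * β * μ := by
  rcases hμ.eq_or_lt with rfl | hμ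
  · norm_num
  have hmono : μ - 1 / μ ≤ m - 1 / m := by gcongr
  have : μ ^ 2 - 1 = (μ - 1 / μ) * μ := by field_simp
  nlinarith

section TTSCSP

variable {n : Type*} [Fintype n] [DecidableEq n] {K : Type*} [Field K]

noncomputable def ttscspIteration (W T : Matrix n n K) (α β : K) : Matrix n n K :=
  (W + β • T)⁻¹ * (T - β • W) * (α • W + T)⁻¹ * (W - α • T)

def ttscspEigenvalue (α β μ : K) : K :=
  (μ - β) * (1 - α * μ) / ((1 + β * μ) * (α + μ))

theorem ttscspIteration_congr_diagonal {R Q : Matrix n n K} (hR : IsUnit R) (hQ : IsUnit Q)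
    {d : n → K} {α β : K} (hβ : ∀ i, 1 + β * d i ≠ 0) (hα : ∀ i, α + d i ≠ 0) :
    ttscspIteration (R * Q) (R * diagonal d * Q) α β
      = Q⁻¹ * diagonal (fun i => ttscspEigenvalue α β (d i)) * Q := by
  have lin := smul_mul_add_smul_mul_diagonal_mul R Q d
  have h1 : R * Q + β • (R * diagonal d * Q) = R * diagonal (fun i => 1 + β * d i) * Q := by
    simpa using lin 1 β
  have h2 : R * diagonal d * Q - β • (R * Q) = R * diagonal (fun i => d i - β) * Q := by
    simpa [sub_eq_neg_add] using lin (-β) 1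
  have h3 : α • (R * Q) + R * diagonal d * Q = R * diagonal (fun i => α + d i) * Q := by
    simpa using lin α 1
  have h4 : R * Q - α • (R * diagonal d * Q) = R * diagonal (fun i => 1 - α * d i) * Q := by
    simpa [sub_eq_add_neg] using lin 1 (-α)
  rw [ttscspIteration, h1, h2, h3, h4, Matrix.mul_assoc _ (R * _ * Q)⁻¹,
    inv_mul_diagonal_mul_mul hR hβ, inv_mul_diagonal_mul_mul hR hα,
    inv_mul_mul_mul_inv_mul_mul hQ, diagonal_mul_diagonal]
  congr 3
  funext i
  rw [ttscspEigenvalue]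
  field_simp [hβ i, hα i]

theorem abs_ttscspEigenvalue_lt_one {α β μ : ℝ} (hβ : 0 < β) (hβα : β < α) (hμ : 0 ≤ μ)
    (hμβ : μ ^ 2 < 1 + 2 * β * μ) : |ttscspEigenvalue α β μ| < 1 := by
  have hα : 0 < α := hβ.trans hβα
  have hden : 0 < (1 + β * μ) * (α + μ) := by positivity
  rw [ttscspEigenvalue, abs_div, abs_of_pos hden, div_lt_one hden, abs_lt]
  constructor
  · nlinarith [mul_lt_mul_of_pos_left hμβ (sub_pos.mpr hβα), mul_nonneg hμ (sq_nonneg β)]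
  · nlinarith [mul_nonneg hμ hμ]

end TTSCSP

theorem ttscsp_convergence_thm3_general
    {n : ℕ}
    (W T : Matrix (Fin n) (Fin n) ℝ)
    (hW : W.PosDef) (hT : T.PosSemidef)
    (S : Matrix (Fin n) (Fin n) ℝ)
    (hSdef : S = (hW.posSemidef.sqrt)⁻¹ * T * (hW.posSemidef.sqrt)⁻¹)
    (hS : S.IsHermitian)
    (μmax : ℝ)
    (hμmax : μmax = ⨆ i, hS.eigenvalues i)
    (α β : ℝ)
    (hβ0 : 0 < β) (hβα : β < α)
    (hβlow : (μmax - 1 / μmax) / 2 < β) :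
    spectralRadius ℂ
      (((W + β • T)⁻¹ * (T - β • W) * (α • W + T)⁻¹ * (W - α • T)).map Complex.ofReal) < 1 := by
  set d := hS.eigenvalues
  have hSpsd : S.PosSemidef := by
    have h := hT.conjTranspose_mul_mul_same (hW.posSemidef.sqrt)⁻¹
    rwa [hW.posSemidef.sqrt_isHermitian.inv.eq, ← hSdef] at h
  have hd0 : ∀ i, 0 ≤ d i := hSpsd.eigenvalues_nonneg
  have hdle : ∀ i, d i ≤ μmax := fun i => hμmax ▸ le_ciSup (Set.finite_range d).bddAbove i
  obtain ⟨Q, hQ, hWQ, hTQ⟩ := hW.exists_isUnit_congr_diagonal hSdef hS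
  simp only [RCLike.ofReal_real_eq_id, id] at hTQ
  change spectralRadius ℂ ((ttscspIteration W T α β).map Complex.ofRealHom) < 1
  rw [hWQ, hTQ, ttscspIteration_congr_diagonal (isUnit_conjTranspose (A := Q) |>.mpr hQ) hQ
    (fun i => (add_pos_of_pos_of_nonneg one_pos (mul_nonneg hβ0.le (hd0 i))).ne')
    (fun i => (add_pos_of_pos_of_nonneg (hβ0.trans hβα) (hd0 i)).ne'),
    spectralRadius_map_inv_mul_diagonal_mul _ hQ, ← Finset.sup_univ_eq_iSup,
    Finset.sup_lt_iff zero_lt_one]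
  intro i _
  rw [ENNReal.coe_lt_one_iff, ← NNReal.coe_lt_coe, coe_nnnorm, Complex.ofRealHom_eq_coe,
    Complex.norm_real, Real.norm_eq_abs]
  exact abs_ttscspEigenvalue_lt_one hβ0 hβα (hd0 i)
    (sq_lt_one_add_two_mul_of_le_of_sub_inv_lt (hd0 i) (hdle i) hβlow)

/-- **Theorem 3 (further sufficient convergence conditions).** Suppose `W` is symmetric
positive definite, `T` is symmetric positive semidefinite and `T ≠ 0`, let `μs` be the
smallest positive eigenvalue and `μmax` the largest eigenvalue of `S = W^{-1/2} T W^{-1/2}`.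
If `0 < β < α`, `α > (1/μs - μs)/2` and `β > (μmax - 1/μmax)/2`, then the spectral radius
of the TTSCSP iteration matrix is less than one. -/
theorem ttscsp_convergence_thm3
    {n : ℕ} (hn : 0 < n)
    (W T : Matrix (Fin n) (Fin n) ℝ)
    (hW : W.PosDef) (hT : T.PosSemidef) (hT0 : T ≠ 0)
    (S : Matrix (Fin n) (Fin n) ℝ)
    (hSdef : S = (hW.posSemidef.sqrt)⁻¹ * T * (hW.posSemidef.sqrt)⁻¹)
    (hS : S.IsHermitian)
    (μs μmax : ℝ)
    (hμs : IsLeast {μ : ℝ | (∃ i, hS.eigenvalues i = μ) ∧ 0 < μ} μs)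
    (hμmax : μmax = ⨆ i, hS.eigenvalues i)
    (α β : ℝ)
    (hβ0 : 0 < β) (hβα : β < α)
    (hαlow : (1 / μs - μs) / 2 < α)
    (hβlow : (μmax - 1 / μmax) / 2 < β) :
    spectralRadius ℂ
      (((W + β • T)⁻¹ * (T - β • W) * (α • W + T)⁻¹ * (W - α • T)).map Complex.ofReal) < 1 :=
  ttscsp_convergence_thm3_general W T hW hT S hSdef hS μmax hμmax α β hβ0 hβα hβlow
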